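/- Let 𝔖 = (𝒟, 𝒰, ℒ, 𝔅) be a 𝒟-invariant, order-increasing group lifting structure with 𝔅 nonempty, and let 𝒞 := ⟨𝒰 ∪ ℒ⟩ be its lifting cascade group. Then irreducible group lifting factorizations in 𝒞 are unique: if S_{N−1}⋯S₀ = S'_{N'−1}⋯S'₀ for two irreducible cascades over 𝒰 ∪ ℒ, then N' = N and S'_i = S_i for all 0 ≤ i < N. -/

import Mathlib

open LaurentPolynomial Matrix

noncomputable section

/-- `R` = the ring `ℝ[z,z⁻¹]` of Laurent polynomials with real coefficients. -/
abbrev R2 := LaurentPolynomial ℝ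

/-- 2×2 matrices over `R`. -/
abbrev M2 := Matrix (Fin 2) (Fin 2) R2

/-- `SL(2,R)`. -/
abbrev SL2 := Matrix.SpecialLinearGroup (Fin 2) R2

/-- The ℝ-algebra involution `σ` determined by `σ(z) = z⁻¹`. -/
def σ : R2 ≃ₐ[ℝ] R2 := LaurentPolynomial.invert

/-- Entrywise application of `σ` to a matrix; plays the role of `H(z⁻¹)`. -/
def mσ (H : M2) : M2 := H.map fun f => σ f

/-- `Λ = diag(1, z⁻¹)`. -/
def Λm : M2 := Matrix.diagonal ![1, T (-1)]

/-- `Λ⁻¹ = diag(1, z)`. -/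
def Λim : M2 := Matrix.diagonal ![1, T 1]

/-- `L = diag(1, -1)`. -/
def Lm : M2 := Matrix.diagonal ![1, -1]

/-- `J = [[0,1],[1,0]]`. -/
def Jm : M2 := !![0, 1; 1, 0]

/-- Upper-triangular lifting matrix `υ(S) = [[1,S],[0,1]]`. -/
def umat (S : R2) : M2 := !![1, S; 0, 1]

/-- Lower-triangular lifting matrix `λ(S) = [[1,0],[S,1]]`. -/
def lmat (S : R2) : M2 := !![1, 0; S, 1]

/-- Unimodular gain-scaling matrix `D_K = diag(1/K, K)`. -/
def DKm (K : ℝ) : M2 := Matrix.diagonal ![C K⁻¹, C K]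

/-- Conjugation `γ_K(A) = D_K · A · D_K⁻¹`. -/
def γm (K : ℝ) (A : M2) : M2 := DKm K * A * (DKm K)⁻¹

/-- Substitution `z ↦ z²` on Laurent polynomials. -/
def sub2 : R2 →ₐ[ℝ] R2 :=
  AddMonoidAlgebra.mapDomainAlgHom ℝ ℝ
    (AddMonoidHom.mk' (fun n : ℤ => 2 * n) (by intro a b; ring))

/-- The scalar filter `H_i(z) = H_{i0}(z²) + z·H_{i1}(z²)` of row `i` of `H`. -/
def scal (H : M2) (i : Fin 2) : R2 := sub2 (H i 0) + T 1 * sub2 (H i 1)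

/-- Order of a (nonzero) Laurent polynomial: largest minus smallest exponent
with nonzero coefficient. -/
def lorder (f : R2) : ℤ := (AddMonoidAlgebra.coeff f).support.max.unbotD 0 - (AddMonoidAlgebra.coeff f).support.min.untopD 0

/-- Evaluation of a Laurent polynomial at a (nonzero) real number. -/
def lev (x : ℝ) (f : R2) : ℝ := (AddMonoidAlgebra.coeff f).sum fun n a => a * x ^ n

/-- Combined support (in the exponent variable) of all entries of a matrix. -/
def msupp (H : M2) : Finset ℤ :=
  Finset.univ.biUnion fun p : Fin 2 × Fin 2 => (AddMonoidAlgebra.coeff (H p.1 p.2)).support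

/-- Polyphase order of a (nonzero) matrix Laurent polynomial `H = Σ h(n) z⁻ⁿ`:
`d - c` where `[c,d]` is the smallest interval with `h(c) ≠ 0 ≠ h(d)`. -/
def morder (H : M2) : ℤ := (msupp H).max.unbotD 0 - (msupp H).min.untopD 0

/-- The product `S_{N-1} ⋯ S_1 · S_0`. -/
def prodRev {M : Type*} [Monoid M] {N : ℕ} (SS : Fin N → M) : M :=
  ((List.ofFn SS).reverse).prod

/-- Partial products: `partialE SS B (n+1) = S_n ⋯ S_0 · B` and `partialE SS B 0 = B`. -/
def partialE {M : Type*} [Monoid M] {N : ℕ} (SS : Fin N → M) (B : M) : ℕ → M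
  | 0 => B
  | n + 1 => (if h : n < N then SS ⟨n, h⟩ else 1) * partialE SS B n

/-- `A` is an upper-triangular lifting matrix. -/
def IsUpper (A : M2) : Prop := ∃ S : R2, A = umat S

/-- `A` is a lower-triangular lifting matrix. -/
def IsLower (A : M2) : Prop := ∃ S : R2, A = lmat S

/-- Strict alternation of the predicates `up`/`lo` along a cascade: no two
consecutive factors are both upper-triangular or both lower-triangular. -/
def AlternatingP {α : Type*} (up lo : α → Prop) {N : ℕ} (SS : Fin N → α) : Prop :=
  ∀ (i : ℕ) (h : i + 1 < N),
    ¬(up (SS ⟨i, by omega⟩) ∧ up (SS ⟨i + 1, h⟩)) ∧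
    ¬(lo (SS ⟨i, by omega⟩) ∧ lo (SS ⟨i + 1, h⟩))

/-- Strict alternation of triangularity along a cascade of matrices. -/
def Alternating {N : ℕ} (SS : Fin N → M2) : Prop := AlternatingP IsUpper IsLower SS

/-- An irreducible cascade of lifting matrices: every factor is a lifting matrix,
no factor is the identity, and triangularity strictly alternates. -/
def IrrCascade {N : ℕ} (SS : Fin N → M2) : Prop :=
  (∀ i, (IsUpper (SS i) ∨ IsLower (SS i)) ∧ SS i ≠ 1) ∧ Alternating SS

/-- A group lifting structure: additive groups `P₀`, `P₁` of lifting filters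
(giving the lifting matrix groups `𝒰 = υ(P₀)` and `ℒ = λ(P₁)`), the full
gain-scaling group `𝒟`, and a set `𝔅 ⊆ SL(2,R)` of base filter banks. -/
structure GLS where
  P0 : AddSubgroup R2
  P1 : AddSubgroup R2
  Bset : Set M2
  hB : ∀ B ∈ Bset, Matrix.det B = 1

/-- The upper-triangular lifting matrix group `𝒰 = υ(P₀)`. -/
def GLS.Uset (G : GLS) : Set M2 := umat '' (G.P0 : Set R2)

/-- The lower-triangular lifting matrix group `ℒ = λ(P₁)`. -/
def GLS.Lset (G : GLS) : Set M2 := lmat '' (G.P1 : Set R2)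

/-- `𝒟`-invariance: every `γ_K` (`K ≠ 0`) fixes `𝒰` and `ℒ`. -/
def GLS.DInv (G : GLS) : Prop :=
  ∀ K : ℝ, K ≠ 0 → γm K '' G.Uset = G.Uset ∧ γm K '' G.Lset = G.Lset

/-- An irreducible cascade over `𝒰 ∪ ℒ`. -/
def GLS.IrrCas (G : GLS) {N : ℕ} (SS : Fin N → M2) : Prop :=
  (∀ i, SS i ∈ G.Uset ∪ G.Lset ∧ SS i ≠ 1) ∧ Alternating SS

/-- The strictly polyphase order-increasing property: along every irreducible
cascade applied to every base filter bank, the polyphase order of the partial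
products strictly increases. -/
def GLS.OrderInc (G : GLS) : Prop :=
  ∀ B ∈ G.Bset, ∀ (N : ℕ) (SS : Fin N → M2), G.IrrCas SS →
    ∀ n < N, morder (partialE SS B (n + 1)) > morder (partialE SS B n)

/-! Applying the order-increasing property to any base filter bank `B` shows that a nonempty
irreducible cascade never multiplies to `I`: its product times `B` has larger order than `B`.
Uniqueness then follows by induction on the length, comparing the rightmost factors. If
`S'₀ ≠ S₀`, then `S'_{N'-1} ⋯ S'₀ S₀⁻¹` is again an irreducible cascade whose first factor lies
on the same side (upper or lower) as `S₀`; the induction hypothesis applied to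
`S_{N-1} ⋯ S₁` identifies that factor with `S₁`, which contradicts alternation. -/

inductive Side
  | upper
  | lower

namespace Side

def mat : Side → R2 → M2
  | upper => umat
  | lower => lmat

def IsLifting (s : Side) (A : M2) : Prop := ∃ S : R2, A = s.mat S

theorem mat_mul_mat (s : Side) (a b : R2) : s.mat a * s.mat b = s.mat (a + b) := by
  cases s <;> simp [mat, umat, lmat, add_comm]

theorem mat_zero (s : Side) : s.mat 0 = 1 := by
  cases s <;> simp [mat, umat, lmat, ← Matrix.one_fin_two]

theorem mat_eq_one_iff {s : Side} {a : R2} : s.mat a = 1 ↔ a = 0 := by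
  refine ⟨fun h => ?_, fun h => h ▸ mat_zero s⟩
  cases s
  · simpa [mat, umat] using congrFun (congrFun h 0) 1
  · simpa [mat, lmat] using congrFun (congrFun h 1) 0

theorem isUnit_mat (s : Side) (a : R2) : IsUnit (s.mat a) :=
  ⟨⟨s.mat a, s.mat (-a), by rw [mat_mul_mat, add_neg_cancel, mat_zero],
    by rw [mat_mul_mat, neg_add_cancel, mat_zero]⟩, rfl⟩

theorem isLifting_mat_iff {s t : Side} {a : R2} (ha : a ≠ 0) :
    t.IsLifting (s.mat a) ↔ t = s := by
  refine ⟨fun ⟨b, hb⟩ => ?_, fun h => h ▸ ⟨a, rfl⟩⟩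
  cases s <;> cases t
  all_goals first
    | rfl
    | exact absurd (congrFun (congrFun hb 0) 1) (by simpa [mat, umat, lmat] using ha)
    | exact absurd (congrFun (congrFun hb 1) 0) (by simpa [mat, umat, lmat] using ha)

theorem alternates_mat_iff {s : Side} {a : R2} (ha : a ≠ 0) (B : M2) :
    (¬(IsUpper (s.mat a) ∧ IsUpper B) ∧ ¬(IsLower (s.mat a) ∧ IsLower B)) ↔
      ¬s.IsLifting B := by
  change ¬(upper.IsLifting _ ∧ _) ∧ ¬(lower.IsLifting _ ∧ _) ↔ _
  rw [isLifting_mat_iff ha, isLifting_mat_iff ha]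
  cases s <;> simp [IsLifting, IsUpper, IsLower, mat]

end Side

theorem prodRev_zero {M : Type*} [Monoid M] (SS : Fin 0 → M) : prodRev SS = 1 := by
  simp [prodRev]

theorem prodRev_cons {M : Type*} [Monoid M] {N : ℕ} (x : M) (SS : Fin N → M) :
    prodRev (Fin.cons x SS : Fin (N + 1) → M) = prodRev SS * x := by
  simp [prodRev, List.ofFn_succ]

theorem prodRev_succ {M : Type*} [Monoid M] {N : ℕ} (SS : Fin (N + 1) → M) :
    prodRev SS = prodRev (Fin.tail SS) * SS 0 := by
  rw [← prodRev_cons, Fin.cons_self_tail]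

theorem prodRev_succ' {M : Type*} [Monoid M] {N : ℕ} (SS : Fin (N + 1) → M) :
    prodRev SS = SS (Fin.last N) * prodRev (Fin.init SS) := by
  rw [prodRev, prodRev, List.ofFn_succ', List.concat_eq_append, List.reverse_concat, List.prod_cons]
  rfl

theorem partialE_init {M : Type*} [Monoid M] {N : ℕ} (SS : Fin (N + 1) → M) (B : M) {n : ℕ}
    (hn : n ≤ N) : partialE SS B n = partialE (Fin.init SS) B n := by
  induction n with
  | zero => rfl
  | succ m ih =>
    rw [partialE, partialE, dif_pos (by omega : m < N + 1), dif_pos (Nat.lt_of_succ_le hn),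
      ih (by omega)]
    rfl

theorem partialE_length {M : Type*} [Monoid M] {N : ℕ} (SS : Fin N → M) (B : M) :
    partialE SS B N = prodRev SS * B := by
  induction N with
  | zero => simp [partialE, prodRev_zero]
  | succ N ih =>
    rw [partialE, dif_pos N.lt_succ_self, partialE_init SS B le_rfl, ih, prodRev_succ', mul_assoc]
    rfl

theorem Alternating.not_isLifting_succ {N : ℕ} {SS : Fin N → M2} (h : Alternating SS)
    {i : ℕ} (hi : i + 1 < N) {s : Side} {a : R2} (ha : a ≠ 0)
    (hSi : SS ⟨i, by omega⟩ = s.mat a) : ¬s.IsLifting (SS ⟨i + 1, hi⟩) :=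
  (Side.alternates_mat_iff ha _).1 (hSi ▸ h i hi)

namespace GLS

variable {G : GLS}

def filters (G : GLS) : Side → AddSubgroup R2
  | .upper => G.P0
  | .lower => G.P1

theorem mat_mem_Uset_union_Lset {s : Side} {a : R2} (ha : a ∈ G.filters s) :
    s.mat a ∈ G.Uset ∪ G.Lset := by
  cases s
  exacts [Or.inl ⟨a, ha, rfl⟩, Or.inr ⟨a, ha, rfl⟩]

theorem exists_mat_of_mem_Uset_union_Lset {A : M2} (hA : A ∈ G.Uset ∪ G.Lset) (h1 : A ≠ 1) :
    ∃ (s : Side) (a : R2), a ∈ G.filters s ∧ a ≠ 0 ∧ A = s.mat a := by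
  rcases hA with ⟨a, ha, rfl⟩ | ⟨a, ha, rfl⟩
  exacts [⟨.upper, a, ha, mt (Side.mat_eq_one_iff (s := .upper)).2 h1, rfl⟩,
    ⟨.lower, a, ha, mt (Side.mat_eq_one_iff (s := .lower)).2 h1, rfl⟩]

theorem IrrCas.tail {N : ℕ} {SS : Fin (N + 1) → M2} (h : G.IrrCas SS) :
    G.IrrCas (Fin.tail SS) :=
  ⟨fun i => h.1 i.succ, fun i hi => h.2 (i + 1) (by omega)⟩

theorem IrrCas.cons {N : ℕ} {SS : Fin N → M2} (hS : G.IrrCas SS) {s : Side} {a : R2}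
    (ha : a ∈ G.filters s) (ha0 : a ≠ 0) (hstart : ∀ h : 0 < N, ¬s.IsLifting (SS ⟨0, h⟩)) :
    G.IrrCas (Fin.cons (s.mat a) SS) := by
  refine ⟨Fin.cases ⟨mat_mem_Uset_union_Lset ha, mt Side.mat_eq_one_iff.1 ha0⟩ hS.1, ?_⟩
  rintro (_ | i) hi
  · exact (Side.alternates_mat_iff ha0 _).2 (hstart (by omega))
  · exact hS.2 i (by omega)

/-- `(s.mat a)⁻¹` is absorbed into the first factor of `SS'` if that lies on side `s`,
and prepended to `SS'` otherwise. -/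
theorem IrrCas.exists_prodRev_eq_mul_mat {N : ℕ} {SS' : Fin (N + 1) → M2} (hS' : G.IrrCas SS')
    {s : Side} {a : R2} (ha : a ∈ G.filters s) (ha0 : a ≠ 0) (hdiff : SS' 0 ≠ s.mat a) :
    ∃ (n : ℕ) (T : Fin (n + 1) → M2),
      G.IrrCas T ∧ s.IsLifting (T 0) ∧ prodRev SS' = prodRev T * s.mat a := by
  obtain ⟨t, b, hb, hb0, hS'0⟩ := exists_mat_of_mem_Uset_union_Lset (hS'.1 0).1 (hS'.1 0).2
  by_cases hts : t = s
  · subst hts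
    have hba : b - a ≠ 0 := sub_ne_zero.2 (by rintro rfl; exact hdiff hS'0)
    refine ⟨N, Fin.cons (t.mat (b - a)) (Fin.tail SS'), ?_, ⟨_, rfl⟩, ?_⟩
    · exact hS'.tail.cons (sub_mem hb ha) hba fun _ =>
        hS'.2.not_isLifting_succ (by omega) hb0 hS'0
    · rw [prodRev_cons, mul_assoc, Side.mat_mul_mat, sub_add_cancel, ← hS'0, ← prodRev_succ]
  · refine ⟨N + 1, Fin.cons (s.mat (-a)) SS', ?_, ⟨_, rfl⟩, ?_⟩
    · refine hS'.cons (neg_mem ha) (neg_ne_zero.2 ha0) fun _ => ?_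
      rw [show SS' ⟨0, _⟩ = t.mat b from hS'0, Side.isLifting_mat_iff hb0]
      exact Ne.symm hts
    · rw [prodRev_cons, mul_assoc, Side.mat_mul_mat, neg_add_cancel, Side.mat_zero, mul_one]

theorem OrderInc.morder_add_le_morder_partialE (hOI : G.OrderInc) {B : M2} (hB : B ∈ G.Bset)
    {N : ℕ} {SS : Fin N → M2} (hS : G.IrrCas SS) {n : ℕ} (hn : n ≤ N) :
    morder B + n ≤ morder (partialE SS B n) := by
  induction n with
  | zero => simp [partialE]
  | succ m ih =>
    have hstep := hOI B hB N SS hS m hn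
    have := ih (by omega)
    push_cast
    omega

theorem OrderInc.eq_zero_of_prodRev_eq_one (hOI : G.OrderInc) (hne : G.Bset.Nonempty)
    {N : ℕ} {SS : Fin N → M2} (hS : G.IrrCas SS) (h : prodRev SS = 1) : N = 0 := by
  obtain ⟨B, hB⟩ := hne
  have := hOI.morder_add_le_morder_partialE hB hS le_rfl
  rw [partialE_length, h, one_mul] at this
  omega

end GLS

theorem stmt14_general (G : GLS) (hOI : G.OrderInc) (hne : G.Bset.Nonempty)
    (N N' : ℕ) (SS : Fin N → M2) (SS' : Fin N' → M2)
    (hIrr : G.IrrCas SS) (hIrr' : G.IrrCas SS')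
    (heq : prodRev SS = prodRev SS') :
    N' = N ∧ ∀ (i : ℕ) (h : i < N) (h' : i < N'), SS' ⟨i, h'⟩ = SS ⟨i, h⟩ := by
  induction N generalizing N' with
  | zero =>
    refine ⟨hOI.eq_zero_of_prodRev_eq_one hne hIrr' ?_, fun i h => absurd h i.not_lt_zero⟩
    rw [← heq, prodRev_zero]
  | succ M ih =>
    obtain _ | M' := N'
    · exact absurd (hOI.eq_zero_of_prodRev_eq_one hne hIrr (by rw [heq, prodRev_zero]))
        M.succ_ne_zero
    obtain ⟨s, a, ha, ha0, hS0⟩ := G.exists_mat_of_mem_Uset_union_Lset (hIrr.1 0).1 (hIrr.1 0).2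
    have hcancel {X Y : M2} (h : X * SS 0 = Y * SS 0) : X = Y :=
      (hS0 ▸ s.isUnit_mat a).mul_right_cancel h
    have hhead : SS' 0 = SS 0 := by
      by_contra hdiff
      obtain ⟨n, T, hT, hT0, hprod⟩ :=
        hIrr'.exists_prodRev_eq_mul_mat ha ha0 (hS0 ▸ hdiff)
      obtain ⟨hn, hfirst⟩ := ih (n + 1) (Fin.tail SS) T hIrr.tail hT
        (hcancel (by rw [← prodRev_succ, heq, hprod, hS0]))
      exact hIrr.2.not_isLifting_succ (i := 0) (by omega) ha0 hS0
        (hfirst 0 (by omega) n.succ_pos ▸ hT0)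
    obtain ⟨hlen, htail⟩ := ih M' (Fin.tail SS) (Fin.tail SS') hIrr.tail hIrr'.tail
      (hcancel (by rw [← prodRev_succ, heq, prodRev_succ, hhead]))
    refine ⟨by omega, fun i h h' => ?_⟩
    cases i with
    | zero => exact hhead
    | succ j => exact htail j (by omega) (by omega)

/-- cf. Brislawn, Group-theoretic structure, Lemma 1.  In a
`𝒟`-invariant, order-increasing group lifting structure with nonempty base set,
irreducible group lifting factorizations in the lifting cascade group
`𝒞 = ⟨𝒰 ∪ ℒ⟩` are unique. -/
theorem stmt14 (G : GLS) (hD : G.DInv) (hOI : G.OrderInc) (hne : G.Bset.Nonempty)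
    (N N' : ℕ) (SS : Fin N → M2) (SS' : Fin N' → M2)
    (hIrr : G.IrrCas SS) (hIrr' : G.IrrCas SS')
    (heq : prodRev SS = prodRev SS') :
    N' = N ∧ ∀ (i : ℕ) (h : i < N) (h' : i < N'), SS' ⟨i, h'⟩ = SS ⟨i, h⟩ :=
  stmt14_general G hOI hne N N' SS SS' hIrr hIrr' heq
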